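/- arXiv:0809.1218 — 5 statements merged into one kernel-verified Lean document; each statement's English description precedes it below -/
import Mathlib

section
/- Let κ ∈ ℝ, let U ⊆ ℝ³ be open, and let u, v : ℝ³ → ℝ be smooth. Suppose that on U the covering equations v_t = (½(κ+1)·u_x² − u_y)·v_x and v_y = −u_x·v_x hold. Then at every point p ∈ U with v_x(p) ≠ 0, the function u satisfies equation (mdKP_κ): u_yy = u_tx + (½(κ+1)·u_x² + u_y)·u_xx + κ·u_x·u_xy at p. -/
/-- Partial derivative with respect to the first coordinate `t` of `(t,x,y) : ℝ × ℝ × ℝ`. -/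
noncomputable def pd_t (f : ℝ × ℝ × ℝ → ℝ) (p : ℝ × ℝ × ℝ) : ℝ :=
  deriv (fun s => f (s, p.2.1, p.2.2)) p.1

/-- Partial derivative with respect to the second coordinate `x`. -/
noncomputable def pd_x (f : ℝ × ℝ × ℝ → ℝ) (p : ℝ × ℝ × ℝ) : ℝ :=
  deriv (fun s => f (p.1, s, p.2.2)) p.2.1

/-- Partial derivative with respect to the third coordinate `y`. -/
noncomputable def pd_y (f : ℝ × ℝ × ℝ → ℝ) (p : ℝ × ℝ × ℝ) : ℝ :=
  deriv (fun s => f (p.1, p.2.1, s)) p.2.2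

open scoped Topology

namespace MdKPAux

lemma pd_t_eq (f : ℝ × ℝ × ℝ → ℝ) (hf : Differentiable ℝ f) (q : ℝ × ℝ × ℝ) :
    pd_t f q = fderiv ℝ f q (1, 0, 0) := by
  obtain ⟨a, b, c⟩ := q
  have hL : HasDerivAt (fun s : ℝ => ((s, b, c) : ℝ × ℝ × ℝ)) (1, 0, 0) a :=
    HasDerivAt.prodMk (hasDerivAt_id a) (HasDerivAt.prodMk (hasDerivAt_const a b) (hasDerivAt_const a c))
  exact ((hf (a, b, c)).hasFDerivAt.comp_hasDerivAt a hL).deriv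

lemma pd_x_eq (f : ℝ × ℝ × ℝ → ℝ) (hf : Differentiable ℝ f) (q : ℝ × ℝ × ℝ) :
    pd_x f q = fderiv ℝ f q (0, 1, 0) := by
  obtain ⟨a, b, c⟩ := q
  have hL : HasDerivAt (fun s : ℝ => ((a, s, c) : ℝ × ℝ × ℝ)) (0, 1, 0) b :=
    HasDerivAt.prodMk (hasDerivAt_const b a) (HasDerivAt.prodMk (hasDerivAt_id b) (hasDerivAt_const b c))
  exact ((hf (a, b, c)).hasFDerivAt.comp_hasDerivAt b hL).deriv

lemma pd_y_eq (f : ℝ × ℝ × ℝ → ℝ) (hf : Differentiable ℝ f) (q : ℝ × ℝ × ℝ) :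
    pd_y f q = fderiv ℝ f q (0, 0, 1) := by
  obtain ⟨a, b, c⟩ := q
  have hL : HasDerivAt (fun s : ℝ => ((a, b, s) : ℝ × ℝ × ℝ)) (0, 0, 1) c :=
    HasDerivAt.prodMk (hasDerivAt_const c a) (HasDerivAt.prodMk (hasDerivAt_const c b) (hasDerivAt_id c))
  exact ((hf (a, b, c)).hasFDerivAt.comp_hasDerivAt c hL).deriv

lemma contDiff_pd (f : ℝ × ℝ × ℝ → ℝ) (hf : ContDiff ℝ (⊤ : ℕ∞) f) (e : ℝ × ℝ × ℝ) :
    ContDiff ℝ (⊤ : ℕ∞) (fun q => fderiv ℝ f q e) :=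
  (hf.fderiv_right (by simp)).clm_apply contDiff_const

lemma contDiff_pd_t (f : ℝ × ℝ × ℝ → ℝ) (hf : ContDiff ℝ (⊤ : ℕ∞) f) :
    ContDiff ℝ (⊤ : ℕ∞) (pd_t f) := by
  have h : pd_t f = fun q => fderiv ℝ f q (1, 0, 0) :=
    funext fun q => pd_t_eq f (hf.differentiable (by simp)) q
  rw [h]; exact contDiff_pd f hf _

lemma contDiff_pd_x (f : ℝ × ℝ × ℝ → ℝ) (hf : ContDiff ℝ (⊤ : ℕ∞) f) :
    ContDiff ℝ (⊤ : ℕ∞) (pd_x f) := by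
  have h : pd_x f = fun q => fderiv ℝ f q (0, 1, 0) :=
    funext fun q => pd_x_eq f (hf.differentiable (by simp)) q
  rw [h]; exact contDiff_pd f hf _

lemma contDiff_pd_y (f : ℝ × ℝ × ℝ → ℝ) (hf : ContDiff ℝ (⊤ : ℕ∞) f) :
    ContDiff ℝ (⊤ : ℕ∞) (pd_y f) := by
  have h : pd_y f = fun q => fderiv ℝ f q (0, 0, 1) :=
    funext fun q => pd_y_eq f (hf.differentiable (by simp)) q
  rw [h]; exact contDiff_pd f hf _

lemma fderiv_pd (f : ℝ × ℝ × ℝ → ℝ) (hf : ContDiff ℝ (⊤ : ℕ∞) f) (e : ℝ × ℝ × ℝ)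
    (p w : ℝ × ℝ × ℝ) :
    fderiv ℝ (fun q => fderiv ℝ f q e) p w = fderiv ℝ (fderiv ℝ f) p w e := by
  rw [fderiv_clm_apply (((hf.fderiv_right (m := (⊤ : ℕ∞)) (by simp)).differentiable (by simp)) p)
    (differentiableAt_const e)]
  simp

lemma d2_symm (f : ℝ × ℝ × ℝ → ℝ) (hf : ContDiff ℝ (⊤ : ℕ∞) f) (p w z : ℝ × ℝ × ℝ) :
    fderiv ℝ (fderiv ℝ f) p w z = fderiv ℝ (fderiv ℝ f) p z w :=
  second_derivative_symmetric (fun y => ((hf.differentiable (by simp)) y).hasFDerivAt)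
    (((hf.fderiv_right (m := (⊤ : ℕ∞)) (by simp)).differentiable (by simp) p).hasFDerivAt) w z

lemma pd_t_pd_x (f : ℝ × ℝ × ℝ → ℝ) (hf : ContDiff ℝ (⊤ : ℕ∞) f) (p : ℝ × ℝ × ℝ) :
    pd_t (pd_x f) p = fderiv ℝ (fderiv ℝ f) p (1,0,0) (0,1,0) := by
  have h : pd_x f = fun q => fderiv ℝ f q (0,1,0) :=
    funext fun q => pd_x_eq f (hf.differentiable (by simp)) q
  rw [pd_t_eq _ ((contDiff_pd_x f hf).differentiable (by simp)), h, fderiv_pd f hf]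

lemma pd_x_pd_x (f : ℝ × ℝ × ℝ → ℝ) (hf : ContDiff ℝ (⊤ : ℕ∞) f) (p : ℝ × ℝ × ℝ) :
    pd_x (pd_x f) p = fderiv ℝ (fderiv ℝ f) p (0,1,0) (0,1,0) := by
  have h : pd_x f = fun q => fderiv ℝ f q (0,1,0) :=
    funext fun q => pd_x_eq f (hf.differentiable (by simp)) q
  rw [pd_x_eq _ ((contDiff_pd_x f hf).differentiable (by simp)), h, fderiv_pd f hf]

lemma pd_y_pd_x (f : ℝ × ℝ × ℝ → ℝ) (hf : ContDiff ℝ (⊤ : ℕ∞) f) (p : ℝ × ℝ × ℝ) :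
    pd_y (pd_x f) p = fderiv ℝ (fderiv ℝ f) p (0,0,1) (0,1,0) := by
  have h : pd_x f = fun q => fderiv ℝ f q (0,1,0) :=
    funext fun q => pd_x_eq f (hf.differentiable (by simp)) q
  rw [pd_y_eq _ ((contDiff_pd_x f hf).differentiable (by simp)), h, fderiv_pd f hf]

lemma pd_y_pd_y (f : ℝ × ℝ × ℝ → ℝ) (hf : ContDiff ℝ (⊤ : ℕ∞) f) (p : ℝ × ℝ × ℝ) :
    pd_y (pd_y f) p = fderiv ℝ (fderiv ℝ f) p (0,0,1) (0,0,1) := by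
  have h : pd_y f = fun q => fderiv ℝ f q (0,0,1) :=
    funext fun q => pd_y_eq f (hf.differentiable (by simp)) q
  rw [pd_y_eq _ ((contDiff_pd_y f hf).differentiable (by simp)), h, fderiv_pd f hf]

lemma pd_t_pd_y (f : ℝ × ℝ × ℝ → ℝ) (hf : ContDiff ℝ (⊤ : ℕ∞) f) (p : ℝ × ℝ × ℝ) :
    pd_t (pd_y f) p = fderiv ℝ (fderiv ℝ f) p (1,0,0) (0,0,1) := by
  have h : pd_y f = fun q => fderiv ℝ f q (0,0,1) :=
    funext fun q => pd_y_eq f (hf.differentiable (by simp)) q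
  rw [pd_t_eq _ ((contDiff_pd_y f hf).differentiable (by simp)), h, fderiv_pd f hf]

lemma pd_x_pd_y (f : ℝ × ℝ × ℝ → ℝ) (hf : ContDiff ℝ (⊤ : ℕ∞) f) (p : ℝ × ℝ × ℝ) :
    pd_x (pd_y f) p = fderiv ℝ (fderiv ℝ f) p (0,1,0) (0,0,1) := by
  have h : pd_y f = fun q => fderiv ℝ f q (0,0,1) :=
    funext fun q => pd_y_eq f (hf.differentiable (by simp)) q
  rw [pd_x_eq _ ((contDiff_pd_y f hf).differentiable (by simp)), h, fderiv_pd f hf]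

lemma pd_y_pd_t (f : ℝ × ℝ × ℝ → ℝ) (hf : ContDiff ℝ (⊤ : ℕ∞) f) (p : ℝ × ℝ × ℝ) :
    pd_y (pd_t f) p = fderiv ℝ (fderiv ℝ f) p (0,0,1) (1,0,0) := by
  have h : pd_t f = fun q => fderiv ℝ f q (1,0,0) :=
    funext fun q => pd_t_eq f (hf.differentiable (by simp)) q
  rw [pd_y_eq _ ((contDiff_pd_t f hf).differentiable (by simp)), h, fderiv_pd f hf]

lemma pd_x_pd_t (f : ℝ × ℝ × ℝ → ℝ) (hf : ContDiff ℝ (⊤ : ℕ∞) f) (p : ℝ × ℝ × ℝ) :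
    pd_x (pd_t f) p = fderiv ℝ (fderiv ℝ f) p (0,1,0) (1,0,0) := by
  have h : pd_t f = fun q => fderiv ℝ f q (1,0,0) :=
    funext fun q => pd_t_eq f (hf.differentiable (by simp)) q
  rw [pd_x_eq _ ((contDiff_pd_t f hf).differentiable (by simp)), h, fderiv_pd f hf]

lemma sliceT (g : ℝ × ℝ × ℝ → ℝ) (hg : ContDiff ℝ (⊤ : ℕ∞) g) (a b c : ℝ) :
    HasDerivAt (fun s => g (s, b, c)) (pd_t g (a, b, c)) a := by
  have hL : HasDerivAt (fun s : ℝ => ((s, b, c) : ℝ × ℝ × ℝ)) (1, 0, 0) a :=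
    HasDerivAt.prodMk (hasDerivAt_id a) (HasDerivAt.prodMk (hasDerivAt_const a b) (hasDerivAt_const a c))
  rw [pd_t_eq g (hg.differentiable (by simp))]
  exact ((hg.differentiable (by simp) (a, b, c)).hasFDerivAt.comp_hasDerivAt a hL)

lemma sliceX (g : ℝ × ℝ × ℝ → ℝ) (hg : ContDiff ℝ (⊤ : ℕ∞) g) (a b c : ℝ) :
    HasDerivAt (fun s => g (a, s, c)) (pd_x g (a, b, c)) b := by
  have hL : HasDerivAt (fun s : ℝ => ((a, s, c) : ℝ × ℝ × ℝ)) (0, 1, 0) b :=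
    HasDerivAt.prodMk (hasDerivAt_const b a) (HasDerivAt.prodMk (hasDerivAt_id b) (hasDerivAt_const b c))
  rw [pd_x_eq g (hg.differentiable (by simp))]
  exact ((hg.differentiable (by simp) (a, b, c)).hasFDerivAt.comp_hasDerivAt b hL)

lemma sliceY (g : ℝ × ℝ × ℝ → ℝ) (hg : ContDiff ℝ (⊤ : ℕ∞) g) (a b c : ℝ) :
    HasDerivAt (fun s => g (a, b, s)) (pd_y g (a, b, c)) c := by
  have hL : HasDerivAt (fun s : ℝ => ((a, b, s) : ℝ × ℝ × ℝ)) (0, 0, 1) c :=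
    HasDerivAt.prodMk (hasDerivAt_const c a) (HasDerivAt.prodMk (hasDerivAt_const c b) (hasDerivAt_id c))
  rw [pd_y_eq g (hg.differentiable (by simp))]
  exact ((hg.differentiable (by simp) (a, b, c)).hasFDerivAt.comp_hasDerivAt c hL)

lemma pd_t_congrU (g h : ℝ × ℝ × ℝ → ℝ) (U : Set (ℝ × ℝ × ℝ)) (hU : IsOpen U)
    (heq : ∀ q ∈ U, g q = h q) (p : ℝ × ℝ × ℝ) (hp : p ∈ U) :
    pd_t g p = pd_t h p := by
  obtain ⟨a, b, c⟩ := p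
  have hc : Continuous (fun s : ℝ => ((s, b, c) : ℝ × ℝ × ℝ)) := by fun_prop
  have hev : (fun s => g (s, b, c)) =ᶠ[𝓝 a] fun s => h (s, b, c) := by
    filter_upwards [(hU.preimage hc).mem_nhds hp] with s hs using heq _ hs
  exact hev.deriv_eq

lemma pd_x_congrU (g h : ℝ × ℝ × ℝ → ℝ) (U : Set (ℝ × ℝ × ℝ)) (hU : IsOpen U)
    (heq : ∀ q ∈ U, g q = h q) (p : ℝ × ℝ × ℝ) (hp : p ∈ U) :
    pd_x g p = pd_x h p := by
  obtain ⟨a, b, c⟩ := p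
  have hc : Continuous (fun s : ℝ => ((a, s, c) : ℝ × ℝ × ℝ)) := by fun_prop
  have hev : (fun s => g (a, s, c)) =ᶠ[𝓝 b] fun s => h (a, s, c) := by
    filter_upwards [(hU.preimage hc).mem_nhds hp] with s hs using heq _ hs
  exact hev.deriv_eq

lemma pd_y_congrU (g h : ℝ × ℝ × ℝ → ℝ) (U : Set (ℝ × ℝ × ℝ)) (hU : IsOpen U)
    (heq : ∀ q ∈ U, g q = h q) (p : ℝ × ℝ × ℝ) (hp : p ∈ U) :
    pd_y g p = pd_y h p := by
  obtain ⟨a, b, c⟩ := p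
  have hc : Continuous (fun s : ℝ => ((a, b, s) : ℝ × ℝ × ℝ)) := by fun_prop
  have hev : (fun s => g (a, b, s)) =ᶠ[𝓝 c] fun s => h (a, b, s) := by
    filter_upwards [(hU.preimage hc).mem_nhds hp] with s hs using heq _ hs
  exact hev.deriv_eq

end MdKPAux

open MdKPAux in
/-- the covering (38) implies the mdKP equation where `v_x ≠ 0`. -/
theorem covering_WE1_implies_mdKP (κ : ℝ) (U : Set (ℝ × ℝ × ℝ)) (hU : IsOpen U)
    (u v : ℝ × ℝ × ℝ → ℝ) (hu : ContDiff ℝ (⊤ : ℕ∞) u) (hv : ContDiff ℝ (⊤ : ℕ∞) v)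
    (hvt : ∀ q ∈ U, pd_t v q = ((κ + 1) / 2 * (pd_x u q) ^ 2 - pd_y u q) * pd_x v q)
    (hvy : ∀ q ∈ U, pd_y v q = -(pd_x u q) * pd_x v q) :
    ∀ p ∈ U, pd_x v p ≠ 0 →
      pd_y (pd_y u) p =
        pd_t (pd_x u) p
        + ((κ + 1) / 2 * (pd_x u p) ^ 2 + pd_y u p) * pd_x (pd_x u) p
        + κ * pd_x u p * pd_y (pd_x u) p := by
  rintro ⟨a, b, c⟩ hp hvx0
  have hux : ContDiff ℝ (⊤ : ℕ∞) (pd_x u) := contDiff_pd_x u hu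
  have huy : ContDiff ℝ (⊤ : ℕ∞) (pd_y u) := contDiff_pd_y u hu
  have hvxs : ContDiff ℝ (⊤ : ℕ∞) (pd_x v) := contDiff_pd_x v hv
  set P : ℝ × ℝ × ℝ := (a, b, c) with hP
  -- E1 : y-derivative of the first covering equation
  have E1 :
      pd_y (pd_t v) P =
        ((κ + 1) / 2 * ((2:ℕ) * pd_x u P ^ (2-1) * pd_y (pd_x u) P) - pd_y (pd_y u) P)
            * pd_x v P
        + ((κ + 1) / 2 * pd_x u P ^ 2 - pd_y u P) * pd_y (pd_x v) P := by
    have e1a := pd_y_congrU (pd_t v)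
      (fun q => ((κ + 1) / 2 * (pd_x u q) ^ 2 - pd_y u q) * pd_x v q) U hU hvt P hp
    have H := ((((sliceY (pd_x u) hux a b c).pow 2).const_mul ((κ + 1) / 2)).sub
      (sliceY (pd_y u) huy a b c)).mul (sliceY (pd_x v) hvxs a b c)
    exact e1a.trans H.deriv
  -- E2 : t-derivative of the second covering equation
  have E2 :
      pd_t (pd_y v) P =
        -(pd_t (pd_x u) P) * pd_x v P + -(pd_x u P) * pd_t (pd_x v) P := by
    have e2a := pd_t_congrU (pd_y v)
      (fun q => -(pd_x u q) * pd_x v q) U hU hvy P hp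
    have H := ((sliceT (pd_x u) hux a b c).neg).mul (sliceT (pd_x v) hvxs a b c)
    exact e2a.trans H.deriv
  -- E3 : x-derivative of the first covering equation
  have E3 :
      pd_x (pd_t v) P =
        ((κ + 1) / 2 * ((2:ℕ) * pd_x u P ^ (2-1) * pd_x (pd_x u) P) - pd_x (pd_y u) P)
            * pd_x v P
        + ((κ + 1) / 2 * pd_x u P ^ 2 - pd_y u P) * pd_x (pd_x v) P := by
    have e3a := pd_x_congrU (pd_t v)
      (fun q => ((κ + 1) / 2 * (pd_x u q) ^ 2 - pd_y u q) * pd_x v q) U hU hvt P hp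
    have H := ((((sliceX (pd_x u) hux a b c).pow 2).const_mul ((κ + 1) / 2)).sub
      (sliceX (pd_y u) huy a b c)).mul (sliceX (pd_x v) hvxs a b c)
    exact e3a.trans H.deriv
  -- E4 : x-derivative of the second covering equation
  have E4 :
      pd_x (pd_y v) P =
        -(pd_x (pd_x u) P) * pd_x v P + -(pd_x u P) * pd_x (pd_x v) P := by
    have e4a := pd_x_congrU (pd_y v)
      (fun q => -(pd_x u q) * pd_x v q) U hU hvy P hp
    have H := ((sliceX (pd_x u) hux a b c).neg).mul (sliceX (pd_x v) hvxs a b c)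
    exact e4a.trans H.deriv
  -- symmetry of second derivatives
  have s1 : pd_y (pd_t v) P = pd_t (pd_y v) P := by
    rw [pd_y_pd_t v hv, pd_t_pd_y v hv, d2_symm v hv]
  have s2 : pd_y (pd_x v) P = pd_x (pd_y v) P := by
    rw [pd_y_pd_x v hv, pd_x_pd_y v hv, d2_symm v hv]
  have s3 : pd_t (pd_x v) P = pd_x (pd_t v) P := by
    rw [pd_t_pd_x v hv, pd_x_pd_t v hv, d2_symm v hv]
  have s4 : pd_x (pd_y u) P = pd_y (pd_x u) P := by
    rw [pd_x_pd_y u hu, pd_y_pd_x u hu, d2_symm u hu]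
  have key :
      pd_y (pd_y u) P * pd_x v P =
        (pd_t (pd_x u) P
          + ((κ + 1) / 2 * (pd_x u P) ^ 2 + pd_y u P) * pd_x (pd_x u) P
          + κ * pd_x u P * pd_y (pd_x u) P) * pd_x v P := by
    linear_combination (norm := (push_cast; ring1))
      E1 - E2 - s1 + pd_x u P * E3 + pd_x u P * s3
      + ((κ + 1) / 2 * pd_x u P ^ 2 - pd_y u P) * E4
      + ((κ + 1) / 2 * pd_x u P ^ 2 - pd_y u P) * s2
      - pd_x u P * pd_x v P * s4
  exact mul_right_cancel₀ hvx0 key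
end

section
/- Let κ ∈ ℝ, let U ⊆ ℝ³ be open, and let u, v : ℝ³ → ℝ be smooth. Define on U: F := (½(κ+1)·u_x² − u_y)·v_x, G := −u_x·v_x, R := v_t − F, S := v_y − G, and E := u_tx + (½(κ+1)·u_x² + u_y)·u_xx + κ·u_x·u_xy − u_yy. Then the identity ∂_y R − ∂_t S + (½(κ+1)·u_x² − u_y)·∂_x S + u_x·∂_x R = −v_x·E holds at every point of U. -/
lemma pd_t_eq (f : ℝ × ℝ × ℝ → ℝ) (p : ℝ × ℝ × ℝ) (hf : DifferentiableAt ℝ f p) :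
    pd_t f p = fderiv ℝ f p (1, 0, 0) := by
  have hline : HasDerivAt (fun s : ℝ => ((s, p.2.1, p.2.2) : ℝ × ℝ × ℝ)) (1, 0, 0) p.1 :=
    HasDerivAt.prodMk (hasDerivAt_id _) (HasDerivAt.prodMk (hasDerivAt_const _ _) (hasDerivAt_const _ _))
  exact (hf.hasFDerivAt.comp_hasDerivAt p.1 hline).deriv

lemma pd_x_eq (f : ℝ × ℝ × ℝ → ℝ) (p : ℝ × ℝ × ℝ) (hf : DifferentiableAt ℝ f p) :
    pd_x f p = fderiv ℝ f p (0, 1, 0) := by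
  have hline : HasDerivAt (fun s : ℝ => ((p.1, s, p.2.2) : ℝ × ℝ × ℝ)) (0, 1, 0) p.2.1 :=
    HasDerivAt.prodMk (hasDerivAt_const _ _) (HasDerivAt.prodMk (hasDerivAt_id _) (hasDerivAt_const _ _))
  exact (hf.hasFDerivAt.comp_hasDerivAt p.2.1 hline).deriv

lemma pd_y_eq (f : ℝ × ℝ × ℝ → ℝ) (p : ℝ × ℝ × ℝ) (hf : DifferentiableAt ℝ f p) :
    pd_y f p = fderiv ℝ f p (0, 0, 1) := by
  have hline : HasDerivAt (fun s : ℝ => ((p.1, p.2.1, s) : ℝ × ℝ × ℝ)) (0, 0, 1) p.2.2 :=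
    HasDerivAt.prodMk (hasDerivAt_const _ _) (HasDerivAt.prodMk (hasDerivAt_const _ _) (hasDerivAt_id _))
  exact (hf.hasFDerivAt.comp_hasDerivAt p.2.2 hline).deriv

lemma smooth_fd (f : ℝ × ℝ × ℝ → ℝ) (hf : ContDiff ℝ (⊤ : ℕ∞) f) (w : ℝ × ℝ × ℝ) :
    ContDiff ℝ (⊤ : ℕ∞) (fun q => fderiv ℝ f q w) :=
  (hf.fderiv_right (le_refl _)).clm_apply contDiff_const

lemma fd2 (f : ℝ × ℝ × ℝ → ℝ) (hf : ContDiff ℝ (⊤ : ℕ∞) f) (w v : ℝ × ℝ × ℝ) (p : ℝ × ℝ × ℝ) :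
    fderiv ℝ (fun q => fderiv ℝ f q w) p v = fderiv ℝ (fderiv ℝ f) p v w := by
  rw [fderiv_clm_apply (((hf.fderiv_right (m := (⊤ : ℕ∞)) (le_refl _)).differentiable (by simp)) p)
    (differentiableAt_const w)]
  simp

lemma fd2_symm (f : ℝ × ℝ × ℝ → ℝ) (hf : ContDiff ℝ (⊤ : ℕ∞) f) (a b : ℝ × ℝ × ℝ) (p : ℝ × ℝ × ℝ) :
    fderiv ℝ (fderiv ℝ f) p a b = fderiv ℝ (fderiv ℝ f) p b a :=
  second_derivative_symmetric
    (fun y => ((hf.differentiable (by simp)) y).hasFDerivAt)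
    (((hf.fderiv_right (m := (⊤ : ℕ∞)) (le_refl _)).differentiable (by simp)) p).hasFDerivAt a b

lemma pd_t_fun (f : ℝ × ℝ × ℝ → ℝ) (hf : ContDiff ℝ (⊤ : ℕ∞) f) :
    pd_t f = fun q => fderiv ℝ f q (1, 0, 0) :=
  funext fun q => pd_t_eq f q ((hf.differentiable (by simp)) q)
lemma pd_x_fun (f : ℝ × ℝ × ℝ → ℝ) (hf : ContDiff ℝ (⊤ : ℕ∞) f) :
    pd_x f = fun q => fderiv ℝ f q (0, 1, 0) :=
  funext fun q => pd_x_eq f q ((hf.differentiable (by simp)) q)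
lemma pd_y_fun (f : ℝ × ℝ × ℝ → ℝ) (hf : ContDiff ℝ (⊤ : ℕ∞) f) :
    pd_y f = fun q => fderiv ℝ f q (0, 0, 1) :=
  funext fun q => pd_y_eq f q ((hf.differentiable (by simp)) q)

lemma smooth_pd_t (f : ℝ × ℝ × ℝ → ℝ) (hf : ContDiff ℝ (⊤ : ℕ∞) f) : ContDiff ℝ (⊤ : ℕ∞) (pd_t f) := by
  rw [pd_t_fun f hf]; exact smooth_fd f hf _
lemma smooth_pd_x (f : ℝ × ℝ × ℝ → ℝ) (hf : ContDiff ℝ (⊤ : ℕ∞) f) : ContDiff ℝ (⊤ : ℕ∞) (pd_x f) := by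
  rw [pd_x_fun f hf]; exact smooth_fd f hf _
lemma smooth_pd_y (f : ℝ × ℝ × ℝ → ℝ) (hf : ContDiff ℝ (⊤ : ℕ∞) f) : ContDiff ℝ (⊤ : ℕ∞) (pd_y f) := by
  rw [pd_y_fun f hf]; exact smooth_fd f hf _

lemma pd_comm_xy (f : ℝ × ℝ × ℝ → ℝ) (hf : ContDiff ℝ (⊤ : ℕ∞) f) (p : ℝ × ℝ × ℝ) :
    pd_x (pd_y f) p = pd_y (pd_x f) p := by
  rw [pd_y_fun f hf, pd_x_fun f hf,
    pd_x_eq _ p (((smooth_fd f hf _).differentiable (by simp)) p),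
    pd_y_eq _ p (((smooth_fd f hf _).differentiable (by simp)) p),
    fd2 f hf _ _ p, fd2 f hf _ _ p, fd2_symm f hf]
lemma pd_comm_tx (f : ℝ × ℝ × ℝ → ℝ) (hf : ContDiff ℝ (⊤ : ℕ∞) f) (p : ℝ × ℝ × ℝ) :
    pd_t (pd_x f) p = pd_x (pd_t f) p := by
  rw [pd_x_fun f hf, pd_t_fun f hf,
    pd_t_eq _ p (((smooth_fd f hf _).differentiable (by simp)) p),
    pd_x_eq _ p (((smooth_fd f hf _).differentiable (by simp)) p),
    fd2 f hf _ _ p, fd2 f hf _ _ p, fd2_symm f hf]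
lemma pd_comm_ty (f : ℝ × ℝ × ℝ → ℝ) (hf : ContDiff ℝ (⊤ : ℕ∞) f) (p : ℝ × ℝ × ℝ) :
    pd_t (pd_y f) p = pd_y (pd_t f) p := by
  rw [pd_y_fun f hf, pd_t_fun f hf,
    pd_t_eq _ p (((smooth_fd f hf _).differentiable (by simp)) p),
    pd_y_eq _ p (((smooth_fd f hf _).differentiable (by simp)) p),
    fd2 f hf _ _ p, fd2 f hf _ _ p, fd2_symm f hf]

lemma slice_t (g : ℝ × ℝ × ℝ → ℝ) (hg : ContDiff ℝ (⊤ : ℕ∞) g) (p : ℝ × ℝ × ℝ) :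
    HasDerivAt (fun s => g (s, p.2.1, p.2.2)) (pd_t g p) p.1 := by
  have hd : DifferentiableAt ℝ (fun s => g (s, p.2.1, p.2.2)) p.1 :=
    ((hg.differentiable (by simp)) p).comp p.1
      (DifferentiableAt.prodMk differentiableAt_id (DifferentiableAt.prodMk (differentiableAt_const _) (differentiableAt_const _)))
  exact hd.hasDerivAt

lemma slice_x (g : ℝ × ℝ × ℝ → ℝ) (hg : ContDiff ℝ (⊤ : ℕ∞) g) (p : ℝ × ℝ × ℝ) :
    HasDerivAt (fun s => g (p.1, s, p.2.2)) (pd_x g p) p.2.1 := by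
  have hd : DifferentiableAt ℝ (fun s => g (p.1, s, p.2.2)) p.2.1 :=
    ((hg.differentiable (by simp)) p).comp p.2.1
      (DifferentiableAt.prodMk (differentiableAt_const _) (DifferentiableAt.prodMk differentiableAt_id (differentiableAt_const _)))
  exact hd.hasDerivAt

lemma slice_y (g : ℝ × ℝ × ℝ → ℝ) (hg : ContDiff ℝ (⊤ : ℕ∞) g) (p : ℝ × ℝ × ℝ) :
    HasDerivAt (fun s => g (p.1, p.2.1, s)) (pd_y g p) p.2.2 := by
  have hd : DifferentiableAt ℝ (fun s => g (p.1, p.2.1, s)) p.2.2 :=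
    ((hg.differentiable (by simp)) p).comp p.2.2
      (DifferentiableAt.prodMk (differentiableAt_const _) (DifferentiableAt.prodMk (differentiableAt_const _) differentiableAt_id))
  exact hd.hasDerivAt

lemma key (κ : ℝ) (u v : ℝ × ℝ × ℝ → ℝ) (hu : ContDiff ℝ (⊤ : ℕ∞) u) (hv : ContDiff ℝ (⊤ : ℕ∞) v)
    (p : ℝ × ℝ × ℝ) :
    pd_y (fun q => pd_t v q - ((κ + 1) / 2 * (pd_x u q) ^ 2 - pd_y u q) * pd_x v q) p
    - pd_t (fun q => pd_y v q - -(pd_x u q) * pd_x v q) p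
    + ((κ + 1) / 2 * (pd_x u p) ^ 2 - pd_y u p) *
        pd_x (fun q => pd_y v q - -(pd_x u q) * pd_x v q) p
    + pd_x u p * pd_x (fun q => pd_t v q - ((κ + 1) / 2 * (pd_x u q) ^ 2 - pd_y u q) * pd_x v q) p
    = -(pd_x v p) *
      (pd_t (pd_x u) p
        + ((κ + 1) / 2 * (pd_x u p) ^ 2 + pd_y u p) * pd_x (pd_x u) p
        + κ * pd_x u p * pd_y (pd_x u) p - pd_y (pd_y u) p) := by
  have hxu := smooth_pd_x u hu
  have hyu := smooth_pd_y u hu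
  have htv := smooth_pd_t v hv
  have hxv := smooth_pd_x v hv
  have hyv := smooth_pd_y v hv
  have hyR : pd_y (fun q => pd_t v q - ((κ + 1) / 2 * (pd_x u q) ^ 2 - pd_y u q) * pd_x v q) p
      = pd_y (pd_t v) p -
        (((κ + 1) / 2 * (((2 : ℕ) : ℝ) * pd_x u p ^ (2 - 1) * pd_y (pd_x u) p)
            - pd_y (pd_y u) p) * pd_x v p
          + ((κ + 1) / 2 * pd_x u p ^ 2 - pd_y u p) * pd_y (pd_x v) p) :=
    ((slice_y _ htv p).sub
      (((((slice_y _ hxu p).pow 2).const_mul ((κ + 1) / 2)).sub (slice_y _ hyu p)).mul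
        (slice_y _ hxv p))).deriv
  have hxR : pd_x (fun q => pd_t v q - ((κ + 1) / 2 * (pd_x u q) ^ 2 - pd_y u q) * pd_x v q) p
      = pd_x (pd_t v) p -
        (((κ + 1) / 2 * (((2 : ℕ) : ℝ) * pd_x u p ^ (2 - 1) * pd_x (pd_x u) p)
            - pd_x (pd_y u) p) * pd_x v p
          + ((κ + 1) / 2 * pd_x u p ^ 2 - pd_y u p) * pd_x (pd_x v) p) :=
    ((slice_x _ htv p).sub
      (((((slice_x _ hxu p).pow 2).const_mul ((κ + 1) / 2)).sub (slice_x _ hyu p)).mul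
        (slice_x _ hxv p))).deriv
  have htS : pd_t (fun q => pd_y v q - -(pd_x u q) * pd_x v q) p
      = pd_t (pd_y v) p -
        ((-pd_t (pd_x u) p) * pd_x v p + (-pd_x u p) * pd_t (pd_x v) p) :=
    ((slice_t _ hyv p).sub (((slice_t _ hxu p).neg).mul (slice_t _ hxv p))).deriv
  have hxS : pd_x (fun q => pd_y v q - -(pd_x u q) * pd_x v q) p
      = pd_x (pd_y v) p -
        ((-pd_x (pd_x u) p) * pd_x v p + (-pd_x u p) * pd_x (pd_x v) p) :=
    ((slice_x _ hyv p).sub (((slice_x _ hxu p).neg).mul (slice_x _ hxv p))).deriv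
  rw [hyR, hxR, htS, hxS, pd_comm_xy u hu p, pd_comm_ty v hv p, ← pd_comm_tx v hv p,
    pd_comm_xy v hv p]
  push_cast
  ring

/-- compatibility identity for the covering (38). -/
theorem covering_WE1_identity (κ : ℝ) (U : Set (ℝ × ℝ × ℝ)) (hU : IsOpen U)
    (u v : ℝ × ℝ × ℝ → ℝ) (hu : ContDiff ℝ (⊤ : ℕ∞) u) (hv : ContDiff ℝ (⊤ : ℕ∞) v) :
    let F : ℝ × ℝ × ℝ → ℝ := fun q => ((κ + 1) / 2 * (pd_x u q) ^ 2 - pd_y u q) * pd_x v q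
    let G : ℝ × ℝ × ℝ → ℝ := fun q => -(pd_x u q) * pd_x v q
    let R : ℝ × ℝ × ℝ → ℝ := fun q => pd_t v q - F q
    let S : ℝ × ℝ × ℝ → ℝ := fun q => pd_y v q - G q
    let E : ℝ × ℝ × ℝ → ℝ := fun q =>
      pd_t (pd_x u) q
      + ((κ + 1) / 2 * (pd_x u q) ^ 2 + pd_y u q) * pd_x (pd_x u) q
      + κ * pd_x u q * pd_y (pd_x u) q - pd_y (pd_y u) q
    ∀ p ∈ U,
      pd_y R p - pd_t S p
      + ((κ + 1) / 2 * (pd_x u p) ^ 2 - pd_y u p) * pd_x S p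
      + pd_x u p * pd_x R p
      = -(pd_x v p) * E p := by
  intro F G R S E p hp
  exact key κ u v hu hv p
end

section
/- Let κ ∈ ℝ with κ ≠ −2 and κ ≠ −3/2, let U ⊆ ℝ³ be open, and let u, v : ℝ³ → ℝ be smooth with v_x > 0 on U. Define on U: F := (2κ+3)⁻¹·v_x^(2κ+3) − u_x·v_x^(κ+2) + (½(κ+1)·u_x² − u_y)·v_x, G := (κ+2)⁻¹·v_x^(κ+2) − u_x·v_x, R := v_t − F, S := v_y − G, F_p := v_x^(2κ+2) − (κ+2)·u_x·v_x^(κ+1) + ½(κ+1)·u_x² − u_y, G_p := v_x^(κ+1) − u_x, and E := u_tx + (½(κ+1)·u_x² + u_y)·u_xx + κ·u_x·u_xy − u_yy. Then the identity ∂_y R − ∂_t S + F_p·∂_x S − G_p·∂_x R = −v_x·E holds at every point of U. -/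
namespace CovAux

abbrev V := ℝ × ℝ × ℝ

noncomputable def et : V := (1, 0, 0)
noncomputable def ex : V := (0, 1, 0)
noncomputable def ey : V := (0, 0, 1)

lemma hasDerivAt_line_t (p : V) :
    HasDerivAt (fun s : ℝ => ((s, p.2.1, p.2.2) : V)) et p.1 :=
  (hasDerivAt_id p.1).prodMk ((hasDerivAt_const _ _).prodMk (hasDerivAt_const _ _))

lemma hasDerivAt_line_x (p : V) :
    HasDerivAt (fun s : ℝ => ((p.1, s, p.2.2) : V)) ex p.2.1 :=
  (hasDerivAt_const _ _).prodMk ((hasDerivAt_id p.2.1).prodMk (hasDerivAt_const _ _))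

lemma hasDerivAt_line_y (p : V) :
    HasDerivAt (fun s : ℝ => ((p.1, p.2.1, s) : V)) ey p.2.2 :=
  (hasDerivAt_const _ _).prodMk ((hasDerivAt_const _ _).prodMk (hasDerivAt_id p.2.2))

lemma hasDerivAt_pd_t {f : V → ℝ} (hf : Differentiable ℝ f) (p : V) :
    HasDerivAt (fun s => f (s, p.2.1, p.2.2)) (pd_t f p) p.1 := by
  have h := ((hf ((p.1, p.2.1, p.2.2) : V)).hasFDerivAt).comp_hasDerivAt p.1 (hasDerivAt_line_t p)
  exact h.differentiableAt.hasDerivAt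

lemma hasDerivAt_pd_x {f : V → ℝ} (hf : Differentiable ℝ f) (p : V) :
    HasDerivAt (fun s => f (p.1, s, p.2.2)) (pd_x f p) p.2.1 := by
  have h := ((hf ((p.1, p.2.1, p.2.2) : V)).hasFDerivAt).comp_hasDerivAt p.2.1 (hasDerivAt_line_x p)
  exact h.differentiableAt.hasDerivAt

lemma hasDerivAt_pd_y {f : V → ℝ} (hf : Differentiable ℝ f) (p : V) :
    HasDerivAt (fun s => f (p.1, p.2.1, s)) (pd_y f p) p.2.2 := by
  have h := ((hf ((p.1, p.2.1, p.2.2) : V)).hasFDerivAt).comp_hasDerivAt p.2.2 (hasDerivAt_line_y p)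
  exact h.differentiableAt.hasDerivAt

lemma pd_t_eq_fderiv {f : V → ℝ} (hf : Differentiable ℝ f) (p : V) :
    pd_t f p = fderiv ℝ f p et :=
  (((hf ((p.1, p.2.1, p.2.2) : V)).hasFDerivAt).comp_hasDerivAt p.1 (hasDerivAt_line_t p)).deriv

lemma pd_x_eq_fderiv {f : V → ℝ} (hf : Differentiable ℝ f) (p : V) :
    pd_x f p = fderiv ℝ f p ex :=
  (((hf ((p.1, p.2.1, p.2.2) : V)).hasFDerivAt).comp_hasDerivAt p.2.1 (hasDerivAt_line_x p)).deriv

lemma pd_y_eq_fderiv {f : V → ℝ} (hf : Differentiable ℝ f) (p : V) :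
    pd_y f p = fderiv ℝ f p ey :=
  (((hf ((p.1, p.2.1, p.2.2) : V)).hasFDerivAt).comp_hasDerivAt p.2.2 (hasDerivAt_line_y p)).deriv

lemma top_add_one_le : (((⊤ : ℕ∞) : WithTop ℕ∞) + 1 ≤ ((⊤ : ℕ∞) : WithTop ℕ∞)) := by
  exact_mod_cast (le_top : (⊤ : ℕ∞) + 1 ≤ ⊤)

lemma contDiff_fderiv_apply {f : V → ℝ} (hf : ContDiff ℝ (⊤ : ℕ∞) f) (w : V) :
    ContDiff ℝ (⊤ : ℕ∞) (fun q => fderiv ℝ f q w) :=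
  (hf.fderiv_right top_add_one_le).clm_apply contDiff_const

lemma pd_t_eq' {f : V → ℝ} (hf : ContDiff ℝ (⊤ : ℕ∞) f) (p : V) :
    pd_t f p = fderiv ℝ f p et := pd_t_eq_fderiv (hf.differentiable (by simp)) p

lemma pd_x_eq' {f : V → ℝ} (hf : ContDiff ℝ (⊤ : ℕ∞) f) (p : V) :
    pd_x f p = fderiv ℝ f p ex := pd_x_eq_fderiv (hf.differentiable (by simp)) p

lemma pd_y_eq' {f : V → ℝ} (hf : ContDiff ℝ (⊤ : ℕ∞) f) (p : V) :
    pd_y f p = fderiv ℝ f p ey := pd_y_eq_fderiv (hf.differentiable (by simp)) p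

lemma contDiff_pd_t {f : V → ℝ} (hf : ContDiff ℝ (⊤ : ℕ∞) f) : ContDiff ℝ (⊤ : ℕ∞) (pd_t f) := by
  have : pd_t f = fun q => fderiv ℝ f q et := funext fun q => pd_t_eq' hf q
  rw [this]; exact contDiff_fderiv_apply hf et

lemma contDiff_pd_x {f : V → ℝ} (hf : ContDiff ℝ (⊤ : ℕ∞) f) : ContDiff ℝ (⊤ : ℕ∞) (pd_x f) := by
  have : pd_x f = fun q => fderiv ℝ f q ex := funext fun q => pd_x_eq' hf q
  rw [this]; exact contDiff_fderiv_apply hf ex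

lemma contDiff_pd_y {f : V → ℝ} (hf : ContDiff ℝ (⊤ : ℕ∞) f) : ContDiff ℝ (⊤ : ℕ∞) (pd_y f) := by
  have : pd_y f = fun q => fderiv ℝ f q ey := funext fun q => pd_y_eq' hf q
  rw [this]; exact contDiff_fderiv_apply hf ey

lemma hasFDerivAt_fderiv_apply {f : V → ℝ} (hf : ContDiff ℝ (⊤ : ℕ∞) f) (p : V) (w : V) :
    HasFDerivAt (fun q => fderiv ℝ f q w)
      ((ContinuousLinearMap.apply ℝ ℝ w).comp (fderiv ℝ (fderiv ℝ f) p)) p := by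
  have hdf : Differentiable ℝ (fderiv ℝ f) :=
    (hf.fderiv_right top_add_one_le).differentiable (by simp)
  exact (ContinuousLinearMap.apply ℝ ℝ w).hasFDerivAt.comp p (hdf p).hasFDerivAt

lemma pd_t_fderiv_apply {f : V → ℝ} (hf : ContDiff ℝ (⊤ : ℕ∞) f) (p : V) (w : V) :
    pd_t (fun q => fderiv ℝ f q w) p = fderiv ℝ (fderiv ℝ f) p et w := by
  rw [pd_t_eq_fderiv ((contDiff_fderiv_apply hf w).differentiable (by simp)) p,
    (hasFDerivAt_fderiv_apply hf p w).fderiv]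
  rfl

lemma pd_x_fderiv_apply {f : V → ℝ} (hf : ContDiff ℝ (⊤ : ℕ∞) f) (p : V) (w : V) :
    pd_x (fun q => fderiv ℝ f q w) p = fderiv ℝ (fderiv ℝ f) p ex w := by
  rw [pd_x_eq_fderiv ((contDiff_fderiv_apply hf w).differentiable (by simp)) p,
    (hasFDerivAt_fderiv_apply hf p w).fderiv]
  rfl

lemma pd_y_fderiv_apply {f : V → ℝ} (hf : ContDiff ℝ (⊤ : ℕ∞) f) (p : V) (w : V) :
    pd_y (fun q => fderiv ℝ f q w) p = fderiv ℝ (fderiv ℝ f) p ey w := by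
  rw [pd_y_eq_fderiv ((contDiff_fderiv_apply hf w).differentiable (by simp)) p,
    (hasFDerivAt_fderiv_apply hf p w).fderiv]
  rfl

lemma symm2 {f : V → ℝ} (hf : ContDiff ℝ (⊤ : ℕ∞) f) (p : V) (vv ww : V) :
    fderiv ℝ (fderiv ℝ f) p vv ww = fderiv ℝ (fderiv ℝ f) p ww vv :=
  (hf.contDiffAt.isSymmSndFDerivAt (by
    rw [minSmoothness_of_isRCLikeNormedField]; exact WithTop.coe_le_coe.mpr (le_top : (2:ℕ∞) ≤ ⊤))) vv ww

lemma pd_comm_ty {f : V → ℝ} (hf : ContDiff ℝ (⊤ : ℕ∞) f) (p : V) :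
    pd_y (pd_t f) p = pd_t (pd_y f) p := by
  have e1 : pd_t f = fun q => fderiv ℝ f q et := funext fun q => pd_t_eq' hf q
  have e2 : pd_y f = fun q => fderiv ℝ f q ey := funext fun q => pd_y_eq' hf q
  rw [e1, e2, pd_y_fderiv_apply hf p et, pd_t_fderiv_apply hf p ey, symm2 hf p]

lemma pd_comm_xy {f : V → ℝ} (hf : ContDiff ℝ (⊤ : ℕ∞) f) (p : V) :
    pd_x (pd_y f) p = pd_y (pd_x f) p := by
  have e1 : pd_y f = fun q => fderiv ℝ f q ey := funext fun q => pd_y_eq' hf q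
  have e2 : pd_x f = fun q => fderiv ℝ f q ex := funext fun q => pd_x_eq' hf q
  rw [e1, e2, pd_x_fderiv_apply hf p ey, pd_y_fderiv_apply hf p ex, symm2 hf p]

lemma pd_comm_xt {f : V → ℝ} (hf : ContDiff ℝ (⊤ : ℕ∞) f) (p : V) :
    pd_x (pd_t f) p = pd_t (pd_x f) p := by
  have e1 : pd_t f = fun q => fderiv ℝ f q et := funext fun q => pd_t_eq' hf q
  have e2 : pd_x f = fun q => fderiv ℝ f q ex := funext fun q => pd_x_eq' hf q
  rw [e1, e2, pd_x_fderiv_apply hf p et, pd_t_fderiv_apply hf p ex, symm2 hf p]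

/-- Derivative of `F` along a line. -/
lemma hasDerivAt_F (κ : ℝ) {α ω ζ : ℝ → ℝ} {s0 a' w' z' : ℝ}
    (ha : HasDerivAt α a' s0) (hw : HasDerivAt ω w' s0) (hz : HasDerivAt ζ z' s0)
    (hpos : 0 < α s0) (hκ3 : 2 * κ + 3 ≠ 0) :
    HasDerivAt (fun s => (2 * κ + 3)⁻¹ * α s ^ (2 * κ + 3)
        - ω s * α s ^ (κ + 2) + ((κ + 1) / 2 * ω s ^ 2 - ζ s) * α s)
      ((α s0 ^ (2 * κ + 2) - (κ + 2) * ω s0 * α s0 ^ (κ + 1)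
          + (κ + 1) / 2 * ω s0 ^ 2 - ζ s0) * a'
        - α s0 ^ (κ + 2) * w' + α s0 * ((κ + 1) * ω s0 * w' - z')) s0 := by
  have hne : α s0 ≠ 0 := ne_of_gt hpos
  have h1 : HasDerivAt (fun s => α s ^ (2 * κ + 3))
      (a' * (2 * κ + 3) * α s0 ^ (2 * κ + 3 - 1)) s0 := ha.rpow_const (Or.inl hne)
  have h2 : HasDerivAt (fun s => α s ^ (κ + 2))
      (a' * (κ + 2) * α s0 ^ (κ + 2 - 1)) s0 := ha.rpow_const (Or.inl hne)
  have h3 : HasDerivAt (fun s => (κ + 1) / 2 * ω s ^ 2 - ζ s)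
      ((κ + 1) / 2 * (2 * ω s0 ^ 1 * w') - z') s0 := (((hw.pow 2)).const_mul _).sub hz
  have h := ((h1.const_mul ((2 * κ + 3)⁻¹)).sub (hw.mul h2)).add (h3.mul ha)
  refine h.congr_deriv ?_
  rw [show 2 * κ + 3 - 1 = 2 * κ + 2 by ring, show κ + 2 - 1 = κ + 1 by ring]
  field_simp
  ring

/-- Derivative of `G` along a line. -/
lemma hasDerivAt_G (κ : ℝ) {α ω : ℝ → ℝ} {s0 a' w' : ℝ}
    (ha : HasDerivAt α a' s0) (hw : HasDerivAt ω w' s0)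
    (hpos : 0 < α s0) (hκ2 : κ + 2 ≠ 0) :
    HasDerivAt (fun s => (κ + 2)⁻¹ * α s ^ (κ + 2) - ω s * α s)
      ((α s0 ^ (κ + 1) - ω s0) * a' - α s0 * w') s0 := by
  have hne : α s0 ≠ 0 := ne_of_gt hpos
  have h2 : HasDerivAt (fun s => α s ^ (κ + 2))
      (a' * (κ + 2) * α s0 ^ (κ + 2 - 1)) s0 := ha.rpow_const (Or.inl hne)
  have h := (h2.const_mul ((κ + 2)⁻¹)).sub (hw.mul ha)
  refine h.congr_deriv ?_
  rw [show κ + 2 - 1 = κ + 1 by ring]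
  field_simp
  ring

end CovAux

open CovAux in
/-- compatibility identity for the covering (39). -/
theorem covering_WE2_identity (κ : ℝ) (hκ2 : κ ≠ -2) (hκ32 : κ ≠ -(3 / 2))
    (U : Set (ℝ × ℝ × ℝ)) (hU : IsOpen U)
    (u v : ℝ × ℝ × ℝ → ℝ) (hu : ContDiff ℝ (⊤ : ℕ∞) u) (hv : ContDiff ℝ (⊤ : ℕ∞) v)
    (hvx : ∀ q ∈ U, 0 < pd_x v q) :
    let F : ℝ × ℝ × ℝ → ℝ := fun q =>
      (2 * κ + 3)⁻¹ * pd_x v q ^ (2 * κ + 3)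
      - pd_x u q * pd_x v q ^ (κ + 2)
      + ((κ + 1) / 2 * (pd_x u q) ^ 2 - pd_y u q) * pd_x v q
    let G : ℝ × ℝ × ℝ → ℝ := fun q => (κ + 2)⁻¹ * pd_x v q ^ (κ + 2) - pd_x u q * pd_x v q
    let R : ℝ × ℝ × ℝ → ℝ := fun q => pd_t v q - F q
    let S : ℝ × ℝ × ℝ → ℝ := fun q => pd_y v q - G q
    let Fp : ℝ × ℝ × ℝ → ℝ := fun q =>
      pd_x v q ^ (2 * κ + 2) - (κ + 2) * pd_x u q * pd_x v q ^ (κ + 1)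
      + (κ + 1) / 2 * (pd_x u q) ^ 2 - pd_y u q
    let Gp : ℝ × ℝ × ℝ → ℝ := fun q => pd_x v q ^ (κ + 1) - pd_x u q
    let E : ℝ × ℝ × ℝ → ℝ := fun q =>
      pd_t (pd_x u) q
      + ((κ + 1) / 2 * (pd_x u q) ^ 2 + pd_y u q) * pd_x (pd_x u) q
      + κ * pd_x u q * pd_y (pd_x u) q - pd_y (pd_y u) q
    ∀ p ∈ U,
      pd_y R p - pd_t S p + Fp p * pd_x S p - Gp p * pd_x R p = -(pd_x v p) * E p := by
  intro F G R S Fp Gp E p hp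
  have hκ2' : κ + 2 ≠ 0 := fun h => hκ2 (by linarith)
  have hκ3' : 2 * κ + 3 ≠ 0 := fun h => hκ32 (by linarith)
  -- differentiability of the first partials
  have hvt : Differentiable ℝ (pd_t v) := (contDiff_pd_t hv).differentiable (by simp)
  have hvxd : Differentiable ℝ (pd_x v) := (contDiff_pd_x hv).differentiable (by simp)
  have hvy : Differentiable ℝ (pd_y v) := (contDiff_pd_y hv).differentiable (by simp)
  have huxd : Differentiable ℝ (pd_x u) := (contDiff_pd_x hu).differentiable (by simp)
  have huyd : Differentiable ℝ (pd_y u) := (contDiff_pd_y hu).differentiable (by simp)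
  -- abbreviations
  set A := pd_x v p with hA
  have hApos : 0 < A := hvx p hp
  have hAne : A ≠ 0 := ne_of_gt hApos
  set W := pd_x u p with hW
  set Z := pd_y u p with hZ
  -- second partial abbreviations
  set at_ := pd_t (pd_x v) p
  set ax_ := pd_x (pd_x v) p
  set ay_ := pd_y (pd_x v) p
  set wt_ := pd_t (pd_x u) p
  set wx_ := pd_x (pd_x u) p
  set wy_ := pd_y (pd_x u) p
  set zy_ := pd_y (pd_y u) p
  -- line derivatives for each direction
  -- direction y
  have hay : HasDerivAt (fun s => pd_x v (p.1, p.2.1, s)) ay_ p.2.2 := hasDerivAt_pd_y hvxd p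
  have hwy : HasDerivAt (fun s => pd_x u (p.1, p.2.1, s)) wy_ p.2.2 := hasDerivAt_pd_y huxd p
  have hzy : HasDerivAt (fun s => pd_y u (p.1, p.2.1, s)) zy_ p.2.2 := hasDerivAt_pd_y huyd p
  -- direction t
  have hat : HasDerivAt (fun s => pd_x v (s, p.2.1, p.2.2)) at_ p.1 := hasDerivAt_pd_t hvxd p
  have hwt : HasDerivAt (fun s => pd_x u (s, p.2.1, p.2.2)) wt_ p.1 := hasDerivAt_pd_t huxd p
  have hzt : HasDerivAt (fun s => pd_y u (s, p.2.1, p.2.2)) (pd_t (pd_y u) p) p.1 :=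
    hasDerivAt_pd_t huyd p
  -- direction x
  have hax : HasDerivAt (fun s => pd_x v (p.1, s, p.2.2)) ax_ p.2.1 := hasDerivAt_pd_x hvxd p
  have hwx : HasDerivAt (fun s => pd_x u (p.1, s, p.2.2)) wx_ p.2.1 := hasDerivAt_pd_x huxd p
  have hzx : HasDerivAt (fun s => pd_y u (p.1, s, p.2.2)) (pd_x (pd_y u) p) p.2.1 :=
    hasDerivAt_pd_x huyd p
  -- the four partial derivatives of R and S
  have hRy : pd_y R p = pd_y (pd_t v) p -
      ((A ^ (2 * κ + 2) - (κ + 2) * W * A ^ (κ + 1) + (κ + 1) / 2 * W ^ 2 - Z) * ay_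
        - A ^ (κ + 2) * wy_ + A * ((κ + 1) * W * wy_ - zy_)) :=
    ((hasDerivAt_pd_y hvt p).sub (hasDerivAt_F κ hay hwy hzy hApos hκ3')).deriv
  have hSt : pd_t S p = pd_t (pd_y v) p - ((A ^ (κ + 1) - W) * at_ - A * wt_) :=
    ((hasDerivAt_pd_t hvy p).sub (hasDerivAt_G κ hat hwt hApos hκ2')).deriv
  have hSx : pd_x S p = pd_x (pd_y v) p - ((A ^ (κ + 1) - W) * ax_ - A * wx_) :=
    ((hasDerivAt_pd_x hvy p).sub (hasDerivAt_G κ hax hwx hApos hκ2')).deriv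
  have hRx : pd_x R p = pd_x (pd_t v) p -
      ((A ^ (2 * κ + 2) - (κ + 2) * W * A ^ (κ + 1) + (κ + 1) / 2 * W ^ 2 - Z) * ax_
        - A ^ (κ + 2) * wx_ + A * ((κ + 1) * W * wx_ - pd_x (pd_y u) p)) :=
    ((hasDerivAt_pd_x hvt p).sub (hasDerivAt_F κ hax hwx hzx hApos hκ3')).deriv
  -- symmetry of second derivatives
  have s1 : pd_y (pd_t v) p = pd_t (pd_y v) p := pd_comm_ty hv p
  have s2 : pd_x (pd_y v) p = ay_ := pd_comm_xy hv p
  have s3 : pd_x (pd_t v) p = at_ := pd_comm_xt hv p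
  have s4 : pd_x (pd_y u) p = wy_ := pd_comm_xy hu p
  rw [hRy, hSt, hSx, hRx, s1, s2, s3, s4]
  have hFp : Fp p = A ^ (2 * κ + 2) - (κ + 2) * W * A ^ (κ + 1) + (κ + 1) / 2 * W ^ 2 - Z := rfl
  have hGp : Gp p = A ^ (κ + 1) - W := rfl
  have hE : E p = wt_ + ((κ + 1) / 2 * W ^ 2 + Z) * wx_ + κ * W * wy_ - zy_ := rfl
  rw [hFp, hGp, hE]
  have e1 : A ^ (κ + 2) = A ^ (κ + 1) * A := by
    rw [show κ + 2 = κ + 1 + 1 by ring, Real.rpow_add hApos, Real.rpow_one]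
  have e2 : A ^ (2 * κ + 2) = A ^ (κ + 1) * A ^ (κ + 1) := by
    rw [show 2 * κ + 2 = (κ + 1) + (κ + 1) by ring, Real.rpow_add hApos]
  rw [e1, e2]
  ring
end

section
/- Let U ⊆ ℝ³ be open and let u, v : ℝ³ → ℝ be smooth with v_x > 0 on U. Suppose that on U the covering equations v_t = −(v_x⁻¹ + u_x + (½·u_x² + u_y)·v_x) and v_y = log v_x − u_x·v_x hold. Then u satisfies equation (mdKP_κ) with κ = −2, namely u_yy = u_tx + (−½·u_x² + u_y)·u_xx − 2·u_x·u_xy, at every point of U. -/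
section Helpers

variable (f : ℝ × ℝ × ℝ → ℝ)

lemma hasDerivAt_pdt (hf : ContDiff ℝ (⊤ : ℕ∞) f) (a b c : ℝ) :
    HasDerivAt (fun s => f (s, b, c)) (pd_t f (a, b, c)) a := by
  have hL : DifferentiableAt ℝ (fun s : ℝ => ((s, b, c) : ℝ × ℝ × ℝ)) a :=
    differentiableAt_id.prodMk
      ((differentiableAt_const b).prodMk (differentiableAt_const c))
  exact ((hf.differentiable (by simp) (a, b, c)).comp a hL).hasDerivAt

lemma hasDerivAt_pdx (hf : ContDiff ℝ (⊤ : ℕ∞) f) (a b c : ℝ) :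
    HasDerivAt (fun s => f (a, s, c)) (pd_x f (a, b, c)) b := by
  have hL : DifferentiableAt ℝ (fun s : ℝ => ((a, s, c) : ℝ × ℝ × ℝ)) b :=
    (differentiableAt_const a).prodMk
      (differentiableAt_id.prodMk (differentiableAt_const c))
  exact ((hf.differentiable (by simp) (a, b, c)).comp b hL).hasDerivAt

lemma hasDerivAt_pdy (hf : ContDiff ℝ (⊤ : ℕ∞) f) (a b c : ℝ) :
    HasDerivAt (fun s => f (a, b, s)) (pd_y f (a, b, c)) c := by
  have hL : DifferentiableAt ℝ (fun s : ℝ => ((a, b, s) : ℝ × ℝ × ℝ)) c :=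
    (differentiableAt_const a).prodMk
      ((differentiableAt_const b).prodMk differentiableAt_id)
  exact ((hf.differentiable (by simp) (a, b, c)).comp c hL).hasDerivAt

lemma pdt_eq (hf : ContDiff ℝ (⊤ : ℕ∞) f) :
    pd_t f = fun p => fderiv ℝ f p ((1 : ℝ), (0 : ℝ), (0 : ℝ)) := by
  funext p
  have hL : HasDerivAt (fun s : ℝ => ((s, p.2.1, p.2.2) : ℝ × ℝ × ℝ))
      ((1 : ℝ), (0 : ℝ), (0 : ℝ)) p.1 :=
    (hasDerivAt_id _).prodMk ((hasDerivAt_const _ _).prodMk (hasDerivAt_const _ _))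
  exact ((hf.differentiable (by simp) p).hasFDerivAt.comp_hasDerivAt p.1 hL).deriv

lemma pdx_eq (hf : ContDiff ℝ (⊤ : ℕ∞) f) :
    pd_x f = fun p => fderiv ℝ f p ((0 : ℝ), (1 : ℝ), (0 : ℝ)) := by
  funext p
  have hL : HasDerivAt (fun s : ℝ => ((p.1, s, p.2.2) : ℝ × ℝ × ℝ))
      ((0 : ℝ), (1 : ℝ), (0 : ℝ)) p.2.1 :=
    (hasDerivAt_const _ _).prodMk ((hasDerivAt_id _).prodMk (hasDerivAt_const _ _))
  exact ((hf.differentiable (by simp) p).hasFDerivAt.comp_hasDerivAt p.2.1 hL).deriv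

lemma pdy_eq (hf : ContDiff ℝ (⊤ : ℕ∞) f) :
    pd_y f = fun p => fderiv ℝ f p ((0 : ℝ), (0 : ℝ), (1 : ℝ)) := by
  funext p
  have hL : HasDerivAt (fun s : ℝ => ((p.1, p.2.1, s) : ℝ × ℝ × ℝ))
      ((0 : ℝ), (0 : ℝ), (1 : ℝ)) p.2.2 :=
    (hasDerivAt_const _ _).prodMk ((hasDerivAt_const _ _).prodMk (hasDerivAt_id _))
  exact ((hf.differentiable (by simp) p).hasFDerivAt.comp_hasDerivAt p.2.2 hL).deriv

lemma contDiff_pdt (hf : ContDiff ℝ (⊤ : ℕ∞) f) : ContDiff ℝ (⊤ : ℕ∞) (pd_t f) := by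
  rw [pdt_eq f hf]
  exact (hf.fderiv_right (by simp)).clm_apply contDiff_const

lemma contDiff_pdx (hf : ContDiff ℝ (⊤ : ℕ∞) f) : ContDiff ℝ (⊤ : ℕ∞) (pd_x f) := by
  rw [pdx_eq f hf]
  exact (hf.fderiv_right (by simp)).clm_apply contDiff_const

lemma contDiff_pdy (hf : ContDiff ℝ (⊤ : ℕ∞) f) : ContDiff ℝ (⊤ : ℕ∞) (pd_y f) := by
  rw [pdy_eq f hf]
  exact (hf.fderiv_right (by simp)).clm_apply contDiff_const

lemma fderiv_fderiv_apply (hf : ContDiff ℝ (⊤ : ℕ∞) f) (p v w : ℝ × ℝ × ℝ) :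
    fderiv ℝ (fun q => fderiv ℝ f q w) p v = fderiv ℝ (fderiv ℝ f) p v w := by
  have hd : DifferentiableAt ℝ (fderiv ℝ f) p :=
    ((hf.fderiv_right (m := (⊤ : ℕ∞)) (by simp)).differentiable (by simp)) p
  rw [fderiv_clm_apply hd (differentiableAt_const w)]
  simp

lemma pd_symm_core (hf : ContDiff ℝ (⊤ : ℕ∞) f) (p v w : ℝ × ℝ × ℝ) :
    fderiv ℝ (fun q => fderiv ℝ f q w) p v = fderiv ℝ (fun q => fderiv ℝ f q v) p w := by
  rw [fderiv_fderiv_apply f hf, fderiv_fderiv_apply f hf]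
  exact (hf.contDiffAt.isSymmSndFDerivAt (by simp [minSmoothness_of_isRCLikeNormedField]; exact WithTop.coe_le_coe.mpr le_top)) v w

lemma pd_xy_comm (hf : ContDiff ℝ (⊤ : ℕ∞) f) (p : ℝ × ℝ × ℝ) :
    pd_x (pd_y f) p = pd_y (pd_x f) p := by
  calc pd_x (pd_y f) p
      = fderiv ℝ (pd_y f) p ((0 : ℝ), (1 : ℝ), (0 : ℝ)) := congrFun (pdx_eq _ (contDiff_pdy f hf)) p
    _ = fderiv ℝ (fun q => fderiv ℝ f q ((0 : ℝ), (0 : ℝ), (1 : ℝ))) p ((0 : ℝ), (1 : ℝ), (0 : ℝ)) := by rw [pdy_eq f hf]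
    _ = fderiv ℝ (fun q => fderiv ℝ f q ((0 : ℝ), (1 : ℝ), (0 : ℝ))) p ((0 : ℝ), (0 : ℝ), (1 : ℝ)) := pd_symm_core f hf p _ _
    _ = fderiv ℝ (pd_x f) p ((0 : ℝ), (0 : ℝ), (1 : ℝ)) := by rw [← pdx_eq f hf]
    _ = pd_y (pd_x f) p := (congrFun (pdy_eq _ (contDiff_pdx f hf)) p).symm

lemma pd_ty_comm (hf : ContDiff ℝ (⊤ : ℕ∞) f) (p : ℝ × ℝ × ℝ) :
    pd_t (pd_y f) p = pd_y (pd_t f) p := by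
  calc pd_t (pd_y f) p
      = fderiv ℝ (pd_y f) p ((1 : ℝ), (0 : ℝ), (0 : ℝ)) := congrFun (pdt_eq _ (contDiff_pdy f hf)) p
    _ = fderiv ℝ (fun q => fderiv ℝ f q ((0 : ℝ), (0 : ℝ), (1 : ℝ))) p ((1 : ℝ), (0 : ℝ), (0 : ℝ)) := by rw [pdy_eq f hf]
    _ = fderiv ℝ (fun q => fderiv ℝ f q ((1 : ℝ), (0 : ℝ), (0 : ℝ))) p ((0 : ℝ), (0 : ℝ), (1 : ℝ)) := pd_symm_core f hf p _ _
    _ = fderiv ℝ (pd_t f) p ((0 : ℝ), (0 : ℝ), (1 : ℝ)) := by rw [← pdt_eq f hf]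
    _ = pd_y (pd_t f) p := (congrFun (pdy_eq _ (contDiff_pdt f hf)) p).symm

lemma pd_tx_comm (hf : ContDiff ℝ (⊤ : ℕ∞) f) (p : ℝ × ℝ × ℝ) :
    pd_x (pd_t f) p = pd_t (pd_x f) p := by
  calc pd_x (pd_t f) p
      = fderiv ℝ (pd_t f) p ((0 : ℝ), (1 : ℝ), (0 : ℝ)) := congrFun (pdx_eq _ (contDiff_pdt f hf)) p
    _ = fderiv ℝ (fun q => fderiv ℝ f q ((1 : ℝ), (0 : ℝ), (0 : ℝ))) p ((0 : ℝ), (1 : ℝ), (0 : ℝ)) := by rw [pdt_eq f hf]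
    _ = fderiv ℝ (fun q => fderiv ℝ f q ((0 : ℝ), (1 : ℝ), (0 : ℝ))) p ((1 : ℝ), (0 : ℝ), (0 : ℝ)) := pd_symm_core f hf p _ _
    _ = fderiv ℝ (pd_x f) p ((1 : ℝ), (0 : ℝ), (0 : ℝ)) := by rw [← pdx_eq f hf]
    _ = pd_t (pd_x f) p := (congrFun (pdt_eq _ (contDiff_pdx f hf)) p).symm

end Helpers

/-- the covering (40) (case κ = −2) implies the mdKP equation. -/
theorem covering_WE3_implies_mdKP (U : Set (ℝ × ℝ × ℝ)) (hU : IsOpen U)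
    (u v : ℝ × ℝ × ℝ → ℝ) (hu : ContDiff ℝ (⊤ : ℕ∞) u) (hv : ContDiff ℝ (⊤ : ℕ∞) v)
    (hvx : ∀ q ∈ U, 0 < pd_x v q)
    (hvt : ∀ q ∈ U, pd_t v q =
      -((pd_x v q)⁻¹ + pd_x u q + ((1 / 2) * (pd_x u q) ^ 2 + pd_y u q) * pd_x v q))
    (hvy : ∀ q ∈ U, pd_y v q = Real.log (pd_x v q) - pd_x u q * pd_x v q) :
    ∀ p ∈ U,
      pd_y (pd_y u) p =
        pd_t (pd_x u) p
        + (-(1 / 2) * (pd_x u p) ^ 2 + pd_y u p) * pd_x (pd_x u) p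
        - 2 * pd_x u p * pd_y (pd_x u) p := by
  intro p hp
  obtain ⟨a, b, c⟩ := p
  have hw : 0 < pd_x v (a, b, c) := hvx _ hp
  have hw0 : pd_x v (a, b, c) ≠ 0 := ne_of_gt hw
  -- eventual membership along the three coordinate lines
  have hUt : ∀ᶠ s in nhds a, (s, b, c) ∈ U := by
    have hc : Continuous (fun s : ℝ => ((s, b, c) : ℝ × ℝ × ℝ)) := by continuity
    exact hc.continuousAt.preimage_mem_nhds (hU.mem_nhds hp)
  have hUx : ∀ᶠ s in nhds b, (a, s, c) ∈ U := by
    have hc : Continuous (fun s : ℝ => ((a, s, c) : ℝ × ℝ × ℝ)) := by continuity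
    exact hc.continuousAt.preimage_mem_nhds (hU.mem_nhds hp)
  have hUy : ∀ᶠ s in nhds c, (a, b, s) ∈ U := by
    have hc : Continuous (fun s : ℝ => ((a, b, s) : ℝ × ℝ × ℝ)) := by continuity
    exact hc.continuousAt.preimage_mem_nhds (hU.mem_nhds hp)
  -- smoothness of first-order partials
  have hvxC := contDiff_pdx v hv
  have hvyC := contDiff_pdy v hv
  have hvtC := contDiff_pdt v hv
  have huxC := contDiff_pdx u hu
  have huyC := contDiff_pdy u hu
  -- derivatives of restrictions, x-direction
  have hAx := hasDerivAt_pdx (pd_x v) hvxC a b c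
  have hBx := hasDerivAt_pdx (pd_x u) huxC a b c
  have hCx := hasDerivAt_pdx (pd_y v) hvyC a b c
  have hDx := hasDerivAt_pdx (pd_y u) huyC a b c
  have hTx := hasDerivAt_pdx (pd_t v) hvtC a b c
  -- derivatives of restrictions, t-direction
  have hAt := hasDerivAt_pdt (pd_x v) hvxC a b c
  have hBt := hasDerivAt_pdt (pd_x u) huxC a b c
  have hCt := hasDerivAt_pdt (pd_y v) hvyC a b c
  -- derivatives of restrictions, y-direction
  have hAy := hasDerivAt_pdy (pd_x v) hvxC a b c
  have hBy := hasDerivAt_pdy (pd_x u) huxC a b c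
  have hDy := hasDerivAt_pdy (pd_y u) huyC a b c
  have hTy := hasDerivAt_pdy (pd_t v) hvtC a b c
  -- Equation E1 : x-derivative of the v_y equation
  have E1 : pd_x (pd_y v) (a, b, c) =
      pd_x (pd_x v) (a, b, c) / pd_x v (a, b, c)
        - (pd_x (pd_x u) (a, b, c) * pd_x v (a, b, c)
            + pd_x u (a, b, c) * pd_x (pd_x v) (a, b, c)) := by
    have hR := (hAx.log hw0).sub (hBx.mul hAx)
    have hEq : (fun s => pd_y v (a, s, c)) =ᶠ[nhds b]
        (fun s => Real.log (pd_x v (a, s, c)) - pd_x u (a, s, c) * pd_x v (a, s, c)) :=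
      hUx.mono fun s hs => hvy _ hs
    exact hCx.unique (hR.congr_of_eventuallyEq hEq)
  -- Equation E2 : t-derivative of the v_y equation
  have E2 : pd_t (pd_y v) (a, b, c) =
      pd_t (pd_x v) (a, b, c) / pd_x v (a, b, c)
        - (pd_t (pd_x u) (a, b, c) * pd_x v (a, b, c)
            + pd_x u (a, b, c) * pd_t (pd_x v) (a, b, c)) := by
    have hR := (hAt.log hw0).sub (hBt.mul hAt)
    have hEq : (fun s => pd_y v (s, b, c)) =ᶠ[nhds a]
        (fun s => Real.log (pd_x v (s, b, c)) - pd_x u (s, b, c) * pd_x v (s, b, c)) :=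
      hUt.mono fun s hs => hvy _ hs
    exact hCt.unique (hR.congr_of_eventuallyEq hEq)
  -- Equation E3 : x-derivative of the v_t equation
  have E3 : pd_x (pd_t v) (a, b, c) =
      pd_x (pd_x v) (a, b, c) / (pd_x v (a, b, c)) ^ 2
        - pd_x (pd_x u) (a, b, c)
        - ((pd_x u (a, b, c) * pd_x (pd_x u) (a, b, c) + pd_x (pd_y u) (a, b, c))
              * pd_x v (a, b, c)
            + ((1 / 2) * (pd_x u (a, b, c)) ^ 2 + pd_y u (a, b, c))
              * pd_x (pd_x v) (a, b, c)) := by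
    have hR := (((hAx.inv hw0).add hBx).add
      ((((hBx.pow 2).const_mul ((1 : ℝ) / 2)).add hDx).mul hAx)).neg
    have hR' : HasDerivAt
        (fun s => -((pd_x v (a, s, c))⁻¹ + pd_x u (a, s, c)
          + ((1 / 2) * (pd_x u (a, s, c)) ^ 2 + pd_y u (a, s, c)) * pd_x v (a, s, c)))
        (pd_x (pd_x v) (a, b, c) / (pd_x v (a, b, c)) ^ 2
          - pd_x (pd_x u) (a, b, c)
          - ((pd_x u (a, b, c) * pd_x (pd_x u) (a, b, c) + pd_x (pd_y u) (a, b, c))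
                * pd_x v (a, b, c)
              + ((1 / 2) * (pd_x u (a, b, c)) ^ 2 + pd_y u (a, b, c))
                * pd_x (pd_x v) (a, b, c))) b := by
      refine hR.congr_deriv ?_
      simp
      ring
    have hEq : (fun s => pd_t v (a, s, c)) =ᶠ[nhds b]
        (fun s => -((pd_x v (a, s, c))⁻¹ + pd_x u (a, s, c)
          + ((1 / 2) * (pd_x u (a, s, c)) ^ 2 + pd_y u (a, s, c)) * pd_x v (a, s, c))) :=
      hUx.mono fun s hs => hvt _ hs
    exact hTx.unique (hR'.congr_of_eventuallyEq hEq)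
  -- Equation E4 : y-derivative of the v_t equation
  have E4 : pd_y (pd_t v) (a, b, c) =
      pd_y (pd_x v) (a, b, c) / (pd_x v (a, b, c)) ^ 2
        - pd_y (pd_x u) (a, b, c)
        - ((pd_x u (a, b, c) * pd_y (pd_x u) (a, b, c) + pd_y (pd_y u) (a, b, c))
              * pd_x v (a, b, c)
            + ((1 / 2) * (pd_x u (a, b, c)) ^ 2 + pd_y u (a, b, c))
              * pd_y (pd_x v) (a, b, c)) := by
    have hR := (((hAy.inv hw0).add hBy).add
      ((((hBy.pow 2).const_mul ((1 : ℝ) / 2)).add hDy).mul hAy)).neg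
    have hR' : HasDerivAt
        (fun s => -((pd_x v (a, b, s))⁻¹ + pd_x u (a, b, s)
          + ((1 / 2) * (pd_x u (a, b, s)) ^ 2 + pd_y u (a, b, s)) * pd_x v (a, b, s)))
        (pd_y (pd_x v) (a, b, c) / (pd_x v (a, b, c)) ^ 2
          - pd_y (pd_x u) (a, b, c)
          - ((pd_x u (a, b, c) * pd_y (pd_x u) (a, b, c) + pd_y (pd_y u) (a, b, c))
                * pd_x v (a, b, c)
              + ((1 / 2) * (pd_x u (a, b, c)) ^ 2 + pd_y u (a, b, c))
                * pd_y (pd_x v) (a, b, c))) c := by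
      refine hR.congr_deriv ?_
      simp
      ring
    have hEq : (fun s => pd_t v (a, b, s)) =ᶠ[nhds c]
        (fun s => -((pd_x v (a, b, s))⁻¹ + pd_x u (a, b, s)
          + ((1 / 2) * (pd_x u (a, b, s)) ^ 2 + pd_y u (a, b, s)) * pd_x v (a, b, s))) :=
      hUy.mono fun s hs => hvt _ hs
    exact hTy.unique (hR'.congr_of_eventuallyEq hEq)
  -- use symmetry of second derivatives
  rw [pd_xy_comm v hv] at E1
  rw [pd_ty_comm v hv] at E2
  rw [pd_tx_comm v hv, pd_xy_comm u hu] at E3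
  have hinv : pd_x v (a, b, c) * (pd_x v (a, b, c))⁻¹ = 1 := mul_inv_cancel₀ hw0
  linear_combination
    (((pd_x v (a, b, c))⁻¹ ^ 2 - (pd_x u (a, b, c)) ^ 2 / 2 - pd_y u (a, b, c))
        * (pd_x v (a, b, c))⁻¹) * E1
    - (pd_x v (a, b, c))⁻¹ * E2
    - (((pd_x v (a, b, c))⁻¹ - pd_x u (a, b, c)) * (pd_x v (a, b, c))⁻¹) * E3
    + (pd_x v (a, b, c))⁻¹ * E4
    + (- pd_y (pd_y u) (a, b, c) + pd_t (pd_x u) (a, b, c)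
        + pd_y u (a, b, c) * pd_x (pd_x u) (a, b, c)
        - 2 * pd_x u (a, b, c) * pd_y (pd_x u) (a, b, c)
        - (1 / 2) * (pd_x u (a, b, c)) ^ 2 * pd_x (pd_x u) (a, b, c)
        + (pd_x v (a, b, c))⁻¹ * pd_y (pd_x u) (a, b, c)
        + (pd_x v (a, b, c))⁻¹ * pd_x u (a, b, c) * pd_x (pd_x u) (a, b, c)
        - (pd_x v (a, b, c))⁻¹ ^ 2 * pd_x (pd_x u) (a, b, c)) * hinv
end

section
/- Let λ ∈ ℝ, let U ⊆ ℝ³ be open, and let u, v : ℝ³ → ℝ be smooth. Suppose that on U the covering equations v_t = −(u_y + λ·u_x − λ²)·v_x and v_y = −(u_x − λ)·v_x hold. Then at every point p ∈ U with v_x(p) ≠ 0, the function u satisfies equation (mdKP_κ) with κ = −1, namely u_yy = u_tx + u_y·u_xx − u_x·u_xy, at p. -/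
noncomputable def Dv (f : ℝ × ℝ × ℝ → ℝ) (e : ℝ × ℝ × ℝ) : ℝ × ℝ × ℝ → ℝ :=
  fun q => fderiv ℝ f q e

lemma contDiff_Dv {f : ℝ × ℝ × ℝ → ℝ} (hf : ContDiff ℝ (⊤ : ℕ∞) f) (e : ℝ × ℝ × ℝ) :
    ContDiff ℝ (⊤ : ℕ∞) (Dv f e) :=
  (hf.fderiv_right (by simp)).clm_apply contDiff_const

lemma pd_t_eq_s13 {f : ℝ × ℝ × ℝ → ℝ} (hf : ContDiff ℝ (⊤ : ℕ∞) f) : pd_t f = Dv f (1,0,0) := by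
  funext p
  have hline : HasDerivAt (fun s : ℝ => ((s, p.2.1, p.2.2) : ℝ × ℝ × ℝ))
      ((1:ℝ),(0:ℝ),(0:ℝ)) p.1 :=
    (hasDerivAt_id p.1).prodMk ((hasDerivAt_const _ _).prodMk (hasDerivAt_const _ _))
  have hf' : HasFDerivAt f (fderiv ℝ f p) ((p.1, p.2.1, p.2.2) : ℝ × ℝ × ℝ) :=
    (hf.differentiable (by simp) p).hasFDerivAt
  exact (hf'.comp_hasDerivAt p.1 hline).deriv

lemma pd_x_eq_s13 {f : ℝ × ℝ × ℝ → ℝ} (hf : ContDiff ℝ (⊤ : ℕ∞) f) : pd_x f = Dv f (0,1,0) := by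
  funext p
  have hline : HasDerivAt (fun s : ℝ => ((p.1, s, p.2.2) : ℝ × ℝ × ℝ))
      ((0:ℝ),(1:ℝ),(0:ℝ)) p.2.1 :=
    (hasDerivAt_const _ _).prodMk ((hasDerivAt_id p.2.1).prodMk (hasDerivAt_const _ _))
  have hf' : HasFDerivAt f (fderiv ℝ f p) ((p.1, p.2.1, p.2.2) : ℝ × ℝ × ℝ) :=
    (hf.differentiable (by simp) p).hasFDerivAt
  exact (hf'.comp_hasDerivAt p.2.1 hline).deriv

lemma pd_y_eq_s13 {f : ℝ × ℝ × ℝ → ℝ} (hf : ContDiff ℝ (⊤ : ℕ∞) f) : pd_y f = Dv f (0,0,1) := by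
  funext p
  have hline : HasDerivAt (fun s : ℝ => ((p.1, p.2.1, s) : ℝ × ℝ × ℝ))
      ((0:ℝ),(0:ℝ),(1:ℝ)) p.2.2 :=
    (hasDerivAt_const _ _).prodMk ((hasDerivAt_const _ _).prodMk (hasDerivAt_id p.2.2))
  have hf' : HasFDerivAt f (fderiv ℝ f p) ((p.1, p.2.1, p.2.2) : ℝ × ℝ × ℝ) :=
    (hf.differentiable (by simp) p).hasFDerivAt
  exact (hf'.comp_hasDerivAt p.2.2 hline).deriv

lemma Dv_Dv {f : ℝ × ℝ × ℝ → ℝ} (hf : ContDiff ℝ (⊤ : ℕ∞) f) (a b p) :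
    Dv (Dv f a) b p = fderiv ℝ (fderiv ℝ f) p b a := by
  have hD : HasFDerivAt (fderiv ℝ f) (fderiv ℝ (fderiv ℝ f) p) p :=
    (((hf.fderiv_right (m := 1) (WithTop.coe_le_coe.mpr le_top)).differentiable one_ne_zero) p).hasFDerivAt
  have h : HasFDerivAt (fun q => fderiv ℝ f q a)
      ((ContinuousLinearMap.apply ℝ ℝ a).comp (fderiv ℝ (fderiv ℝ f) p)) p :=
    (ContinuousLinearMap.apply ℝ ℝ a).hasFDerivAt.comp p hD
  exact congrFun (congrArg DFunLike.coe h.fderiv) b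

lemma Dv_comm {f : ℝ × ℝ × ℝ → ℝ} (hf : ContDiff ℝ (⊤ : ℕ∞) f) (a b p) :
    Dv (Dv f a) b p = Dv (Dv f b) a p := by
  have hd : ∀ y, HasFDerivAt f (fderiv ℝ f y) y :=
    fun y => (hf.differentiable (by simp) y).hasFDerivAt
  have hD : HasFDerivAt (fderiv ℝ f) (fderiv ℝ (fderiv ℝ f) p) p :=
    (((hf.fderiv_right (m := 1) (WithTop.coe_le_coe.mpr le_top)).differentiable one_ne_zero) p).hasFDerivAt
  rw [Dv_Dv hf a b p, Dv_Dv hf b a p]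
  exact second_derivative_symmetric hd hD b a

lemma Dv_congr {f g : ℝ × ℝ × ℝ → ℝ} {U : Set (ℝ × ℝ × ℝ)} (hU : IsOpen U) {p} (hp : p ∈ U)
    (h : ∀ q ∈ U, f q = g q) (e) : Dv f e p = Dv g e p := by
  have hfg : f =ᶠ[nhds p] g := Filter.eventually_of_mem (hU.mem_nhds hp) h
  simp [Dv, hfg.fderiv_eq]

lemma Dv_mul {f g : ℝ × ℝ × ℝ → ℝ} (hf : ContDiff ℝ (⊤ : ℕ∞) f) (hg : ContDiff ℝ (⊤ : ℕ∞) g) (e p) :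
    Dv (fun q => f q * g q) e p = Dv f e p * g p + f p * Dv g e p := by
  have hf' := (hf.differentiable (by simp) p).hasFDerivAt
  have hg' := (hg.differentiable (by simp) p).hasFDerivAt
  have h : fderiv ℝ (fun q => f q * g q) p = _ := (hf'.mul hg').fderiv
  simp [Dv, h]; ring

lemma Dv_comb {h1 h2 : ℝ × ℝ × ℝ → ℝ} (H1 : ContDiff ℝ (⊤ : ℕ∞) h1) (H2 : ContDiff ℝ (⊤ : ℕ∞) h2)
    (lam c : ℝ) (e p) :
    Dv (fun q => -(h1 q + lam * h2 q - c)) e p = -(Dv h1 e p + lam * Dv h2 e p) := by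
  have h1' := (H1.differentiable (by simp) p).hasFDerivAt
  have h2' := (H2.differentiable (by simp) p).hasFDerivAt
  have h : fderiv ℝ (fun q => -(h1 q + lam * h2 q - c)) p = _ := (((h1'.add (h2'.const_mul lam)).sub_const c).neg).fderiv
  have h' : Dv (fun q => -(h1 q + lam * h2 q - c)) e p
      = (-(fderiv ℝ h1 p + lam • fderiv ℝ h2 p)) e := by unfold Dv; rw [h]
  rw [h']; simp [Dv]

lemma Dv_comb2 {h1 : ℝ × ℝ × ℝ → ℝ} (H1 : ContDiff ℝ (⊤ : ℕ∞) h1) (c : ℝ) (e p) :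
    Dv (fun q => -(h1 q - c)) e p = -(Dv h1 e p) := by
  have h1' := (H1.differentiable (by simp) p).hasFDerivAt
  have h : fderiv ℝ (fun q => -(h1 q - c)) p = _ := ((h1'.sub_const c).neg).fderiv
  have h' : Dv (fun q => -(h1 q - c)) e p = (-(fderiv ℝ h1 p)) e := by unfold Dv; rw [h]
  rw [h']; simp [Dv]

/-- the covering (43) (case κ = −1) implies the mdKP equation where `v_x ≠ 0`. -/
theorem covering_WE6_implies_mdKP (lam : ℝ) (U : Set (ℝ × ℝ × ℝ)) (hU : IsOpen U)
    (u v : ℝ × ℝ × ℝ → ℝ) (hu : ContDiff ℝ (⊤ : ℕ∞) u) (hv : ContDiff ℝ (⊤ : ℕ∞) v)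
    (hvt : ∀ q ∈ U, pd_t v q = -(pd_y u q + lam * pd_x u q - lam ^ 2) * pd_x v q)
    (hvy : ∀ q ∈ U, pd_y v q = -(pd_x u q - lam) * pd_x v q) :
    ∀ p ∈ U, pd_x v p ≠ 0 →
      pd_y (pd_y u) p =
        pd_t (pd_x u) p
        + pd_y u p * pd_x (pd_x u) p
        - pd_x u p * pd_y (pd_x u) p := by
  intro p hp hvx
  have hvx' : Dv v (0,1,0) p ≠ 0 := by rwa [pd_x_eq_s13 hv] at hvx
  set A : ℝ × ℝ × ℝ → ℝ := fun q => -(Dv u (0,0,1) q + lam * Dv u (0,1,0) q - lam ^ 2) with hA_def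
  set B : ℝ × ℝ × ℝ → ℝ := fun q => -(Dv u (0,1,0) q - lam) with hB_def
  have hA : ContDiff ℝ (⊤ : ℕ∞) A :=
    (((contDiff_Dv hu (0,0,1)).add (contDiff_const.mul (contDiff_Dv hu (0,1,0)))).sub
      contDiff_const).neg
  have hB : ContDiff ℝ (⊤ : ℕ∞) B := ((contDiff_Dv hu (0,1,0)).sub contDiff_const).neg
  have hvt' : ∀ q ∈ U, Dv v (1,0,0) q = A q * Dv v (0,1,0) q := by
    intro q hq
    have h := hvt q hq
    rw [pd_t_eq_s13 hv, pd_y_eq_s13 hu, pd_x_eq_s13 hu, pd_x_eq_s13 hv] at h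
    exact h
  have hvy' : ∀ q ∈ U, Dv v (0,0,1) q = B q * Dv v (0,1,0) q := by
    intro q hq
    have h := hvy q hq
    rw [pd_y_eq_s13 hv, pd_x_eq_s13 hu, pd_x_eq_s13 hv] at h
    exact h
  have hABvx : ContDiff ℝ (⊤ : ℕ∞) (Dv v (0,1,0)) := contDiff_Dv hv (0,1,0)
  -- expansions
  have h1 : Dv (Dv v (1,0,0)) (0,0,1) p
      = Dv A (0,0,1) p * Dv v (0,1,0) p + A p * Dv (Dv v (0,1,0)) (0,0,1) p := by
    rw [Dv_congr hU hp hvt' (0,0,1)]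
    exact Dv_mul hA hABvx (0,0,1) p
  have h2 : Dv (Dv v (0,1,0)) (0,0,1) p = Dv (Dv v (0,0,1)) (0,1,0) p := Dv_comm hv _ _ p
  have h3 : Dv (Dv v (0,0,1)) (0,1,0) p
      = Dv B (0,1,0) p * Dv v (0,1,0) p + B p * Dv (Dv v (0,1,0)) (0,1,0) p := by
    rw [Dv_congr hU hp hvy' (0,1,0)]
    exact Dv_mul hB hABvx (0,1,0) p
  have h4 : Dv (Dv v (0,0,1)) (1,0,0) p
      = Dv B (1,0,0) p * Dv v (0,1,0) p + B p * Dv (Dv v (0,1,0)) (1,0,0) p := by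
    rw [Dv_congr hU hp hvy' (1,0,0)]
    exact Dv_mul hB hABvx (1,0,0) p
  have h5 : Dv (Dv v (0,1,0)) (1,0,0) p = Dv (Dv v (1,0,0)) (0,1,0) p := Dv_comm hv _ _ p
  have h6 : Dv (Dv v (1,0,0)) (0,1,0) p
      = Dv A (0,1,0) p * Dv v (0,1,0) p + A p * Dv (Dv v (0,1,0)) (0,1,0) p := by
    rw [Dv_congr hU hp hvt' (0,1,0)]
    exact Dv_mul hA hABvx (0,1,0) p
  have h7 : Dv (Dv v (1,0,0)) (0,0,1) p = Dv (Dv v (0,0,1)) (1,0,0) p := Dv_comm hv _ _ p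
  -- coefficients
  have hAy : Dv A (0,0,1) p
      = -(Dv (Dv u (0,0,1)) (0,0,1) p + lam * Dv (Dv u (0,1,0)) (0,0,1) p) :=
    Dv_comb (contDiff_Dv hu (0,0,1)) (contDiff_Dv hu (0,1,0)) lam (lam ^ 2) (0,0,1) p
  have hAx : Dv A (0,1,0) p
      = -(Dv (Dv u (0,0,1)) (0,1,0) p + lam * Dv (Dv u (0,1,0)) (0,1,0) p) :=
    Dv_comb (contDiff_Dv hu (0,0,1)) (contDiff_Dv hu (0,1,0)) lam (lam ^ 2) (0,1,0) p
  have hBt : Dv B (1,0,0) p = -(Dv (Dv u (0,1,0)) (1,0,0) p) :=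
    Dv_comb2 (contDiff_Dv hu (0,1,0)) lam (1,0,0) p
  have hBx : Dv B (0,1,0) p = -(Dv (Dv u (0,1,0)) (0,1,0) p) :=
    Dv_comb2 (contDiff_Dv hu (0,1,0)) lam (0,1,0) p
  have hucomm : Dv (Dv u (0,0,1)) (0,1,0) p = Dv (Dv u (0,1,0)) (0,0,1) p := Dv_comm hu _ _ p
  have hucommt : Dv (Dv u (0,1,0)) (1,0,0) p = Dv (Dv u (1,0,0)) (0,1,0) p := Dv_comm hu _ _ p
  have hE : Dv A (0,0,1) p * Dv v (0,1,0) p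
        + A p * (Dv B (0,1,0) p * Dv v (0,1,0) p + B p * Dv (Dv v (0,1,0)) (0,1,0) p)
      = Dv B (1,0,0) p * Dv v (0,1,0) p
        + B p * (Dv A (0,1,0) p * Dv v (0,1,0) p + A p * Dv (Dv v (0,1,0)) (0,1,0) p) := by
    rw [← h3, ← h2, ← h1, ← h6, ← h5, ← h4, h7]
  rw [hAy, hAx, hBt, hBx, hucomm, hA_def, hB_def] at hE
  simp only at hE
  rw [pd_y_eq_s13 hu, pd_x_eq_s13 hu, pd_y_eq_s13 (contDiff_Dv hu (0,0,1)),
    pd_t_eq_s13 (contDiff_Dv hu (0,1,0)), pd_x_eq_s13 (contDiff_Dv hu (0,1,0)),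
    pd_y_eq_s13 (contDiff_Dv hu (0,1,0))]
  have key : (Dv (Dv u (0,0,1)) (0,0,1) p
      - (Dv (Dv u (0,1,0)) (1,0,0) p + Dv u (0,0,1) p * Dv (Dv u (0,1,0)) (0,1,0) p
        - Dv u (0,1,0) p * Dv (Dv u (0,1,0)) (0,0,1) p)) * Dv v (0,1,0) p = 0 := by
    linear_combination -hE
  rcases mul_eq_zero.mp key with h | h
  · linarith
  · exact absurd h hvx'
end
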